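/- arXiv:0901.4548 — 2 statements merged into one kernel-verified Lean document; each statement's English description precedes it below -/
import Mathlib

section
/- Suppose (E_m)_{m≥0} are nonnegative reals, μ ≥ 0, and δ, κ > 0 are such that E_r + κ ∑_{m=1}^{r} A_m − θ ∑_{m=1}^{r} E_{m−1} A_m ≤ μ for all r ≤ N, with A_m ≥ 0, and θ μ ≤ κ/2. Then E_r + (κ/2) ∑_{m=1}^{r} A_m ≤ μ for all r ≤ N. -/
/-! The bound is proved by strong induction on `r`. Once it holds below `r`, every earlier energy
satisfies `E (m - 1) ≤ μ`, so the nonlinear term is at most `θ μ ∑ A m ≤ (κ / 2) ∑ A m` and is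
absorbed by half of the dissipation `κ ∑ A m`. -/

open Finset

theorem Finset.sum_mul_le_mul_sum_of_le {ι : Type*} {s : Finset ι} {f g : ι → ℝ} {c : ℝ}
    (hf : ∀ i ∈ s, f i ≤ c) (hg : ∀ i ∈ s, 0 ≤ g i) :
    ∑ i ∈ s, f i * g i ≤ c * ∑ i ∈ s, g i := by
  rw [mul_sum]
  exact sum_le_sum fun i hi => mul_le_mul_of_nonneg_right (hf i hi) (hg i hi)

theorem le_of_add_mul_sum_le {E A : ℕ → ℝ} {μ c : ℝ} {r : ℕ} (hA : ∀ m, 0 ≤ A m) (hc : 0 ≤ c)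
    (h : E r + c * ∑ m ∈ Icc 1 r, A m ≤ μ) : E r ≤ μ := by
  have : 0 ≤ c * ∑ m ∈ Icc 1 r, A m := mul_nonneg hc (sum_nonneg fun m _ => hA m)
  linarith

theorem nonlinear_sum_le_of_forall_lt_le {E A : ℕ → ℝ} {μ κ θ : ℝ} {r : ℕ}
    (hA : ∀ m, 0 ≤ A m) (hθ : 0 ≤ θ) (hsmall : θ * μ ≤ κ / 2) (hE : ∀ m < r, E m ≤ μ) :
    θ * ∑ m ∈ Icc 1 r, E (m - 1) * A m ≤ κ / 2 * ∑ m ∈ Icc 1 r, A m := by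
  have hsum : ∑ m ∈ Icc 1 r, E (m - 1) * A m ≤ μ * ∑ m ∈ Icc 1 r, A m :=
    sum_mul_le_mul_sum_of_le (fun m hm => hE _ (by grind)) fun m _ => hA m
  calc θ * ∑ m ∈ Icc 1 r, E (m - 1) * A m ≤ θ * (μ * ∑ m ∈ Icc 1 r, A m) :=
        mul_le_mul_of_nonneg_left hsum hθ
    _ = θ * μ * ∑ m ∈ Icc 1 r, A m := (mul_assoc _ _ _).symm
    _ ≤ κ / 2 * ∑ m ∈ Icc 1 r, A m :=
        mul_le_mul_of_nonneg_right hsmall (sum_nonneg fun m _ => hA m)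

theorem inductive_bootstrap_general
    (N : ℕ) (E A : ℕ → ℝ) (μ κ θ : ℝ)
    (hA : ∀ m, 0 ≤ A m)
    (hκ : 0 < κ) (hθ : 0 ≤ θ)
    (h : ∀ r ≤ N, E r + κ * ∑ m ∈ Finset.Icc 1 r, A m
          - θ * ∑ m ∈ Finset.Icc 1 r, E (m - 1) * A m ≤ μ)
    (hsmall : θ * μ ≤ κ / 2) :
    ∀ r ≤ N, E r + (κ / 2) * ∑ m ∈ Finset.Icc 1 r, A m ≤ μ := by
  intro r
  induction r using Nat.strong_induction_on with
  | _ r ih =>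
    intro hr
    have hE : ∀ m < r, E m ≤ μ := fun m hm =>
      le_of_add_mul_sum_le hA (by positivity) (ih m hm (by omega))
    have := nonlinear_sum_le_of_forall_lt_le hA hθ hsmall hE
    linarith [h r hr]

theorem inductive_bootstrap
    (N : ℕ) (E A : ℕ → ℝ) (μ δ κ θ : ℝ)
    (hE : ∀ m, 0 ≤ E m) (hA : ∀ m, 0 ≤ A m)
    (hμ : 0 ≤ μ) (hδ : 0 < δ) (hκ : 0 < κ) (hθ : 0 ≤ θ)
    (h : ∀ r ≤ N, E r + κ * ∑ m ∈ Finset.Icc 1 r, A m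
          - θ * ∑ m ∈ Finset.Icc 1 r, E (m - 1) * A m ≤ μ)
    (hsmall : θ * μ ≤ κ / 2) :
    ∀ r ≤ N, E r + (κ / 2) * ∑ m ∈ Finset.Icc 1 r, A m ≤ μ :=
  inductive_bootstrap_general N E A μ κ θ hA hκ hθ h hsmall
end

section
/- Let V ⊂ H be real Hilbert spaces with ‖v‖ ≥ λ₁^{1/2}|v| (Poincaré inequality with constant λ₁ > 0), and let b : V×V×V → ℝ be a continuous trilinear form with b(u,v,v)=0 and |b(u,v,w)| ≤ C λ₁^{−1/2}‖u‖‖v‖‖w‖. Suppose ν > 0, f ∈ H, and u₁, u₂ ∈ V both satisfy ν((u_i, v)) + b(u_i, u_i, v) = (f, v) for all v ∈ V, and both satisfy the a priori bound ‖u_i‖ ≤ |f|/(ν λ₁^{1/2}). If C λ₁^{−1/2} ‖u₁‖ < ν, then u₁ = u₂. -/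
theorem steady_state_uniqueness
    {V : Type*} [NormedAddCommGroup V] [InnerProductSpace ℝ V] [CompleteSpace V]
    (b : V → V → V → ℝ) (C lam ν : ℝ) (hlam : 0 < lam) (hν : 0 < ν)
    (hb3 : ∀ u v : V, b u v v = 0)
    (hbbound : ∀ u v w : V, |b u v w| ≤ C / Real.sqrt lam * ‖u‖ * ‖v‖ * ‖w‖)
    (hblin : ∀ u₁ u₂ v w : V, b (u₁ - u₂) v w = b u₁ v w - b u₂ v w)
    (hblin2 : ∀ u v₁ v₂ w : V, b u (v₁ - v₂) w = b u v₁ w - b u v₂ w)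
    (hH : V → ℝ) (hPoincare : ∀ v : V, Real.sqrt lam * hH v ≤ ‖v‖)
    (f : V) (ℓ : V →ₗ[ℝ] ℝ)
    (u₁ u₂ : V)
    (heq₁ : ∀ v : V, ν * (inner ℝ u₁ v : ℝ) + b u₁ u₁ v = ℓ v)
    (heq₂ : ∀ v : V, ν * (inner ℝ u₂ v : ℝ) + b u₂ u₂ v = ℓ v)
    (hap₁ : ‖u₁‖ ≤ hH f / (ν * Real.sqrt lam))
    (hap₂ : ‖u₂‖ ≤ hH f / (ν * Real.sqrt lam))
    (hsmall : C / Real.sqrt lam * ‖u₁‖ < ν) :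
    u₁ = u₂ := by

  set w := u₁ - u₂ with hw
  by_contra hne
  have hwne : w ≠ 0 := sub_ne_zero.mpr hne
  have hwpos : 0 < ‖w‖ := norm_pos_iff.mpr hwne
  -- subtract equations at v = w
  have hsub : ν * (inner ℝ w w : ℝ) + b w u₁ w + b u₂ w w = 0 := by
    have h1 := heq₁ w
    have h2 := heq₂ w
    have : ν * (inner ℝ u₁ w : ℝ) + b u₁ u₁ w - (ν * (inner ℝ u₂ w : ℝ) + b u₂ u₂ w) = 0 := by
      rw [h1, h2]; ring
    have hinner : (inner ℝ w w : ℝ) = (inner ℝ u₁ w : ℝ) - (inner ℝ u₂ w : ℝ) := by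
      rw [hw, inner_sub_left]
    have hbw : b w u₁ w = b u₁ u₁ w - b u₂ u₁ w := hblin u₁ u₂ u₁ w
    have hbw2 : b u₂ w w = b u₂ u₁ w - b u₂ u₂ w := hblin2 u₂ u₁ u₂ w
    rw [hinner, hbw, hbw2]; ring_nf; ring_nf at this; linarith
  have hz : b u₂ w w = 0 := hb3 u₂ w
  have hnorm : (inner ℝ w w : ℝ) = ‖w‖ ^ 2 := real_inner_self_eq_norm_sq w
  have hkey : ν * ‖w‖ ^ 2 = -(b w u₁ w) := by
    rw [hz] at hsub; rw [← hnorm]; linarith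
  have hbound : ν * ‖w‖ ^ 2 ≤ C / Real.sqrt lam * ‖w‖ * ‖u₁‖ * ‖w‖ := by
    rw [hkey]
    calc -(b w u₁ w) ≤ |b w u₁ w| := neg_le_abs _
      _ ≤ C / Real.sqrt lam * ‖w‖ * ‖u₁‖ * ‖w‖ := hbbound w u₁ w
  have : ν * ‖w‖ ^ 2 < ν * ‖w‖ ^ 2 := by
    calc ν * ‖w‖ ^ 2 ≤ C / Real.sqrt lam * ‖w‖ * ‖u₁‖ * ‖w‖ := hbound
      _ = (C / Real.sqrt lam * ‖u₁‖) * ‖w‖ ^ 2 := by ring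
      _ < ν * ‖w‖ ^ 2 := by
          exact mul_lt_mul_of_pos_right hsmall (by positivity)
  exact absurd this (lt_irrefl _)
end
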